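/- Let B be Lorentzian of signature (1, n−1) on V with n ≥ 3, and let F be a nonzero 2-form on V of type N with multiple null direction ℓ ≠ 0. Then there exists m ∈ V with B(ℓ,m) = 0 and B(m,m) > 0 such that F(x,y) = B(ℓ,x)B(m,y) − B(m,x)B(ℓ,y) for all x,y ∈ V. (A type N bivector is decomposable as the wedge of its null direction with an orthogonal spacelike vector.) -/

import Mathlib

/-! Contracting `ℓ♭ ∧ F = 0` with a vector `u` such that `B ℓ u ≠ 0` gives `F = ℓ♭ ∧ φ` with
`φ = F(u, ·) / B(ℓ, u)`, and nondegeneracy of `B` writes `φ = m♭`. Since `F ≠ 0`, the covectors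
`ℓ♭` and `m♭` are independent, so `ι_ℓ F = 0` forces `B ℓ ℓ = B ℓ m = 0`. In a Lorentzian space a
vector orthogonal to a nonzero null vector `ℓ` is spacelike unless it is a multiple of `ℓ`:
subtracting the right multiple of `ℓ` kills its time coordinate, and a vector `w` with zero time
coordinate has `B w w = ∑ wₐ²`. A multiple `m = t ℓ` would make `F = t ℓ♭ ∧ ℓ♭ = 0`. -/

open scoped BigOperators

/-- `ι_ℓ F = 0`: the interior product of the alternating form `F` with the vector `ℓ`
vanishes.  Since `F` is alternating, this is equivalent to saying that `F` vanishes
whenever one of its arguments equals `ℓ`. -/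
def IotaZero {V : Type*} [AddCommGroup V] [Module ℝ V] {p : ℕ}
    (F : AlternatingMap ℝ V ℝ (Fin p)) (ℓ : V) : Prop :=
  ∀ v : Fin p → V, (∃ i, v i = ℓ) → F v = 0

/-- `ℓ♭ ∧ F = 0` with respect to the bilinear form `B`. -/
def WedgeFlatZero {V : Type*} [AddCommGroup V] [Module ℝ V] {p : ℕ}
    (B : V →ₗ[ℝ] V →ₗ[ℝ] ℝ) (F : AlternatingMap ℝ V ℝ (Fin p)) (ℓ : V) : Prop :=
  ∀ v : Fin (p + 1) → V,
    ∑ i : Fin (p + 1), (-1 : ℝ) ^ (i : ℕ) * B ℓ (v i) * F (v ∘ i.succAbove) = 0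

/-- `F` is of type N with multiple null direction `ℓ` (Definition 1.1). -/
def TypeN {V : Type*} [AddCommGroup V] [Module ℝ V] {p : ℕ}
    (B : V →ₗ[ℝ] V →ₗ[ℝ] ℝ) (F : AlternatingMap ℝ V ℝ (Fin p)) (ℓ : V) : Prop :=
  IotaZero F ℓ ∧ WedgeFlatZero B F ℓ

/-- The signs `ε₀ = −1`, `ε_a = 1` for `a ≥ 1`. -/
def epsSign {n : ℕ} (a : Fin n) : ℝ := if (a : ℕ) = 0 then -1 else 1

/-- `e` is a pseudo-orthonormal basis for `B` of Lorentzian signature `(1, n−1)`. -/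
def IsLorentzBasis {V : Type*} [AddCommGroup V] [Module ℝ V] {n : ℕ}
    (B : V →ₗ[ℝ] V →ₗ[ℝ] ℝ) (e : Module.Basis (Fin n) ℝ V) : Prop :=
  ∀ a b : Fin n, B (e a) (e b) = if a = b then epsSign a else 0

section

variable {V : Type*} [AddCommGroup V] [Module ℝ V]

lemma AlternatingMap.eq_zero_of_fin_two {R M N : Type*} [Semiring R] [AddCommMonoid M]
    [Module R M] [AddCommMonoid N] [Module R N] {F : AlternatingMap R M N (Fin 2)}
    (h : ∀ x y, F ![x, y] = 0) : F = 0 :=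
  AlternatingMap.ext fun v => by
    rw [show v = ![v 0, v 1] by ext i; fin_cases i <;> rfl]
    exact h _ _

lemma WedgeFlatZero.sum_three_eq_zero {B : V →ₗ[ℝ] V →ₗ[ℝ] ℝ}
    {F : AlternatingMap ℝ V ℝ (Fin 2)} {ℓ : V} (h : WedgeFlatZero B F ℓ) (x y z : V) :
    B ℓ x * F ![y, z] - B ℓ y * F ![x, z] + B ℓ z * F ![x, y] = 0 := by
  have h0 : ![x, y, z] ∘ Fin.succAbove 0 = ![y, z] := rfl
  have h1 : ![x, y, z] ∘ Fin.succAbove 1 = ![x, z] := by ext i; fin_cases i <;> rfl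
  have h2 : ![x, y, z] ∘ Fin.succAbove 2 = ![x, y] := by ext i; fin_cases i <;> rfl
  have h3 := h ![x, y, z]
  rw [Fin.sum_univ_three, h0, h1, h2] at h3
  simpa [sub_eq_add_neg] using h3

lemma WedgeFlatZero.exists_eq_wedge {B : V →ₗ[ℝ] V →ₗ[ℝ] ℝ}
    {F : AlternatingMap ℝ V ℝ (Fin 2)} {ℓ u : V} (h : WedgeFlatZero B F ℓ) (hu : B ℓ u ≠ 0) :
    ∃ φ : Module.Dual ℝ V, ∀ x y, F ![x, y] = B ℓ x * φ y - φ x * B ℓ y := by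
  have hcontract (x : V) : F.toMultilinearMap.toLinearMap ![u, u] 1 x = F ![u, x] := by
    rw [MultilinearMap.toLinearMap_apply]
    exact congrArg F (funext fun i => by fin_cases i <;> rfl)
  refine ⟨(B ℓ u)⁻¹ • F.toMultilinearMap.toLinearMap ![u, u] 1, fun x y => ?_⟩
  simp only [LinearMap.smul_apply, hcontract, smul_eq_mul]
  field_simp
  linear_combination h.sum_three_eq_zero u x y

lemma IotaZero.apply_eq_zero_of_eq_wedge {F : AlternatingMap ℝ V ℝ (Fin 2)} {ℓ : V}
    (h : IotaZero F ℓ) (hF : F ≠ 0) {α β : Module.Dual ℝ V}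
    (hαβ : ∀ x y, F ![x, y] = α x * β y - β x * α y) : α ℓ = 0 ∧ β ℓ = 0 := by
  obtain ⟨x, y, hxy⟩ : ∃ x y, F ![x, y] ≠ 0 := by
    contrapose! hF
    exact AlternatingMap.eq_zero_of_fin_two hF
  have hℓ (z : V) : α ℓ * β z - β ℓ * α z = 0 := by
    rw [← hαβ]; exact h ![ℓ, z] ⟨0, rfl⟩
  rw [hαβ] at hxy
  constructor
  · refine (mul_eq_zero.mp ?_).resolve_right hxy
    linear_combination α x * hℓ y - α y * hℓ x
  · refine (mul_eq_zero.mp ?_).resolve_right hxy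
    linear_combination β x * hℓ y - β y * hℓ x

lemma epsSign_mul_self {n : ℕ} (a : Fin n) : epsSign a * epsSign a = 1 := by
  unfold epsSign; split_ifs <;> norm_num

namespace IsLorentzBasis

variable {n : ℕ} {B : V →ₗ[ℝ] V →ₗ[ℝ] ℝ} {e : Module.Basis (Fin n) ℝ V}

lemma apply_basis (he : IsLorentzBasis B e) (x : V) (a : Fin n) :
    B x (e a) = epsSign a * e.repr x a := by
  conv_lhs => rw [← e.sum_repr x]
  simp [-Module.Basis.sum_repr, he _ a, mul_comm]

lemma apply_eq_sum (he : IsLorentzBasis B e) (x y : V) :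
    B x y = ∑ a, epsSign a * (e.repr x a * e.repr y a) := by
  conv_lhs => rw [← e.sum_repr y]
  simp only [map_sum, map_smul, smul_eq_mul, he.apply_basis]
  exact Finset.sum_congr rfl fun a _ => by ring

lemma apply_comm (he : IsLorentzBasis B e) (x y : V) : B x y = B y x := by
  simp only [he.apply_eq_sum, mul_comm (e.repr x _)]

lemma exists_apply_ne_zero (he : IsLorentzBasis B e) {x : V} (hx : x ≠ 0) :
    ∃ u, B x u ≠ 0 := by
  contrapose! hx
  refine e.forall_coord_eq_zero_iff.mp fun a => ?_
  rw [Module.Basis.coord_apply]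
  calc e.repr x a = epsSign a * (epsSign a * e.repr x a) := by
        rw [← mul_assoc, epsSign_mul_self, one_mul]
    _ = 0 := by rw [← he.apply_basis, hx, mul_zero]

lemma surjective (he : IsLorentzBasis B e) : Function.Surjective B := by
  intro φ
  refine ⟨∑ a, (epsSign a * φ (e a)) • e a, e.ext fun b => ?_⟩
  rw [he.apply_basis, e.repr_sum_self, ← mul_assoc, epsSign_mul_self, one_mul]

variable [NeZero n]

lemma eq_zero_of_repr_zero_of_apply_self_nonpos (he : IsLorentzBasis B e) {w : V}
    (h0 : e.repr w 0 = 0) (hw : B w w ≤ 0) : w = 0 := by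
  have hsum : B w w = ∑ a, e.repr w a * e.repr w a := by
    rw [he.apply_eq_sum]
    refine Finset.sum_congr rfl fun a _ => ?_
    by_cases ha : a = 0
    · simp [ha, h0]
    · simp [epsSign, Fin.val_eq_zero_iff, ha]
  rw [hsum] at hw
  have hzero := (Finset.sum_eq_zero_iff_of_nonneg fun a _ => mul_self_nonneg (e.repr w a)).mp
    (le_antisymm hw (Finset.sum_nonneg fun a _ => mul_self_nonneg _))
  exact e.forall_coord_eq_zero_iff.mp fun a => by simpa using hzero a (Finset.mem_univ a)

lemma exists_eq_smul_of_isOrtho_null (he : IsLorentzBasis B e) {ℓ m : V} (hℓ : ℓ ≠ 0)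
    (hℓℓ : B ℓ ℓ = 0) (hℓm : B ℓ m = 0) (hmm : B m m ≤ 0) : ∃ t : ℝ, m = t • ℓ := by
  have hℓ0 : e.repr ℓ 0 ≠ 0 := fun h => hℓ (he.eq_zero_of_repr_zero_of_apply_self_nonpos h hℓℓ.le)
  set t := e.repr m 0 / e.repr ℓ 0
  refine ⟨t, sub_eq_zero.mp (he.eq_zero_of_repr_zero_of_apply_self_nonpos ?_ ?_)⟩
  · simp [t, hℓ0]
  · calc B (m - t • ℓ) (m - t • ℓ) = B m m - t * B m ℓ - t * B ℓ m + t * t * B ℓ ℓ := by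
          simp only [map_sub, map_smul, LinearMap.sub_apply, LinearMap.smul_apply, smul_eq_mul]
          ring
      _ ≤ 0 := by rw [he.apply_comm m ℓ, hℓm, hℓℓ]; linarith

end IsLorentzBasis

end

theorem typeN_two_form_decomposable_general {V : Type*} [AddCommGroup V] [Module ℝ V]
    {n : ℕ}
    (B : V →ₗ[ℝ] V →ₗ[ℝ] ℝ)
    (hLor : ∃ e : Module.Basis (Fin n) ℝ V, IsLorentzBasis B e)
    (F : AlternatingMap ℝ V ℝ (Fin 2)) (hF : F ≠ 0)
    {ℓ : V} (hℓ : ℓ ≠ 0) (hN : TypeN B F ℓ) :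
    ∃ m : V, B ℓ m = 0 ∧ 0 < B m m ∧
      ∀ x y : V, F ![x, y] = B ℓ x * B m y - B m x * B ℓ y := by
  obtain ⟨e, he⟩ := hLor
  obtain ⟨u, hu⟩ := he.exists_apply_ne_zero hℓ
  obtain ⟨φ, hφ⟩ := hN.2.exists_eq_wedge hu
  obtain ⟨m, rfl⟩ := he.surjective φ
  obtain ⟨hℓℓ, hmℓ⟩ := hN.1.apply_eq_zero_of_eq_wedge hF hφ
  have hℓm : B ℓ m = 0 := he.apply_comm ℓ m ▸ hmℓ
  refine ⟨m, hℓm, lt_of_not_ge fun hmm => hF ?_, hφ⟩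
  have : NeZero n := ⟨by rintro rfl; exact hℓ (e.ext_elem finZeroElim)⟩
  obtain ⟨t, rfl⟩ := he.exists_eq_smul_of_isOrtho_null hℓ hℓℓ hℓm hmm
  exact AlternatingMap.eq_zero_of_fin_two fun x y => by
    simp only [hφ, map_smul, LinearMap.smul_apply, smul_eq_mul]
    ring

/-- a nonzero type N 2-form on a Lorentzian space (`n ≥ 3`) is
decomposable as the wedge of its multiple null direction `ℓ` with an orthogonal
spacelike vector `m`. -/
theorem typeN_two_form_decomposable {V : Type*} [AddCommGroup V] [Module ℝ V]
    [FiniteDimensional ℝ V] {n : ℕ} (hn : 3 ≤ n)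
    (B : V →ₗ[ℝ] V →ₗ[ℝ] ℝ)
    (hLor : ∃ e : Module.Basis (Fin n) ℝ V, IsLorentzBasis B e)
    (F : AlternatingMap ℝ V ℝ (Fin 2)) (hF : F ≠ 0)
    {ℓ : V} (hℓ : ℓ ≠ 0) (hN : TypeN B F ℓ) :
    ∃ m : V, B ℓ m = 0 ∧ 0 < B m m ∧
      ∀ x y : V, F ![x, y] = B ℓ x * B m y - B m x * B ℓ y :=
  typeN_two_form_decomposable_general B hLor F hF hℓ hN
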